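/- arXiv:2404.10651 — 5 statements merged into one kernel-verified Lean document; each statement's English description precedes it below -/
import Mathlib

section
/- Every GSNC ring is strongly π-regular: for every a ∈ R there exist k ∈ ℕ and r ∈ R with a^k = a^{k+1} r. -/
/-- A ring is GSNC if for every non-unit `a`, `a - a ^ 2` is nilpotent. -/
def IsGSNC (R : Type*) [Ring R] : Prop :=
  ∀ a : R, ¬ IsUnit a → IsNilpotent (a - a ^ 2)

theorem gsnc_stronglyPiRegular {R : Type*} [Ring R] (h : IsGSNC R) :
    ∀ a : R, ∃ (k : ℕ) (r : R), a ^ k = a ^ (k + 1) * r := by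
  intro a
  by_cases hu : IsUnit a
  · obtain ⟨u, rfl⟩ := hu
    exact ⟨1, ↑u⁻¹, by simp [pow_succ, mul_assoc]⟩
  · obtain ⟨n, hn⟩ := h a hu
    set m := n + 1 with hm
    have hcomm : Commute a (1 - a) := (Commute.one_right a).sub_right (Commute.refl a)
    have key : a ^ m * (1 - a) ^ m = 0 := by
      have h1 : a - a ^ 2 = a * (1 - a) := by noncomm_ring
      have h2 : (a - a ^ 2) ^ m = 0 := by
        rw [hm, pow_succ, hn, zero_mul]
      calc a ^ m * (1 - a) ^ m = (a * (1 - a)) ^ m := (hcomm.mul_pow m).symm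
        _ = 0 := by rw [← h1, h2]
    set s : R := ∑ j ∈ Finset.range m, (1 - a) ^ j with hs
    have g : ((1 - a) - 1) * s = (1 - a) ^ m - 1 := mul_geom_sum _ _
    have has : a * s = 1 - (1 - a) ^ m := by
      calc a * s = -((((1 - a) - 1)) * s) := by noncomm_ring
        _ = -((1 - a) ^ m - 1) := by rw [g]
        _ = 1 - (1 - a) ^ m := neg_sub _ _
    refine ⟨m, s, ?_⟩
    have : a ^ m * (a * s) = a ^ m := by
      rw [has, mul_sub, mul_one, key, sub_zero]
    calc a ^ m = a ^ m * (a * s) := this.symm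
      _ = a ^ (m + 1) * s := by simp [pow_succ, mul_assoc]
end

section
/- For a nil ideal I of a ring R, R is GSNC if and only if R/I is GSNC. -/
theorem gsnc_iff_quotient_gsnc {R : Type*} [Ring R] (I : TwoSidedIdeal R)
    (hI : ∀ x ∈ I, IsNilpotent x) :
    IsGSNC R ↔ IsGSNC I.ringCon.Quotient := by
  set f : R →+* I.ringCon.Quotient := I.ringCon.mk' with hf
  have hsurj : Function.Surjective f := Quotient.mk''_surjective
  have hker : ∀ x : R, f x = 0 ↔ x ∈ I := by
    intro x
    have : f x = f 0 ↔ I.ringCon x 0 := RingCon.eq _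
    simpa [I.rel_iff, sub_zero] using this
  have hunit : ∀ a : R, IsUnit (f a) ↔ IsUnit a := by
    intro a
    constructor
    · rintro ⟨u, hu⟩
      obtain ⟨b, hb⟩ := hsurj (↑u⁻¹ : I.ringCon.Quotient)
      have h1 : f (a * b - 1) = 0 := by
        simp [map_mul, ← hu, hb, ← Units.val_mul]
      have h2 : f (b * a - 1) = 0 := by
        simp [map_mul, ← hu, hb, ← Units.val_mul]
      have u1 : IsUnit (a * b) := by
        simpa using (hI _ ((hker _).1 h1)).isUnit_add_one
      have u2 : IsUnit (b * a) := by
        simpa using (hI _ ((hker _).1 h2)).isUnit_add_one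
      obtain ⟨c, hc⟩ := u1.exists_right_inv
      obtain ⟨d, hd⟩ := u2.exists_left_inv
      have hr : a * (b * c) = 1 := by rw [← mul_assoc]; exact hc
      have hl : (d * b) * a = 1 := by rw [mul_assoc]; exact hd
      have : d * b = b * c := by
        calc d * b = (d * b) * (a * (b * c)) := by rw [hr, mul_one]
        _ = ((d * b) * a) * (b * c) := by simp [mul_assoc]
        _ = b * c := by rw [hl, one_mul]
      exact ⟨⟨a, b * c, hr, by rw [← this]; exact hl⟩, rfl⟩
    · exact fun h => h.map f
  constructor
  · intro h x hx
    obtain ⟨a, rfl⟩ := hsurj x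
    have : ¬ IsUnit a := fun h' => hx ((hunit a).2 h')
    have := (h a this).map f
    simpa [map_sub, map_pow] using this
  · intro h a ha
    have : ¬ IsUnit (f a) := fun h' => ha ((hunit a).1 h')
    obtain ⟨n, hn⟩ := h (f a) this
    have hmem : (a - a ^ 2) ^ n ∈ I := by
      rw [← hker]
      simpa [map_sub, map_pow] using hn
    obtain ⟨m, hm⟩ := hI _ hmem
    exact ⟨n * m, by rw [pow_mul]; exact hm⟩
end

section
/- A finite direct product ∏_{i=1}^n R_i (n ≥ 2) of nonzero rings is GSNC if and only if each R_i is strongly nil-clean. -/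
theorem pi_gsnc_iff_stronglyNilClean {n : ℕ} (hn : 2 ≤ n) {R : Fin n → Type*}
    [∀ i, Ring (R i)] [∀ i, Nontrivial (R i)] :
    IsGSNC (∀ i, R i) ↔ ∀ i, ∀ a : R i, IsNilpotent (a - a ^ 2) := by
  constructor
  · intro h i a
    have hnt : Nontrivial (Fin n) := Fin.nontrivial_iff_two_le.mpr hn
    obtain ⟨j, hj⟩ := exists_ne i
    set x : ∀ k, R k := Pi.single i a with hx
    have hnu : ¬ IsUnit x := by
      intro hu
      have := hu.map (Pi.evalRingHom R j)
      simp only [Pi.evalRingHom_apply, hx, Pi.single_eq_of_ne hj] at this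
      exact not_isUnit_zero this
    have hnil := (h x hnu).map (Pi.evalRingHom R i)
    simpa [hx] using hnil
  · intro h x _
    have hk : ∀ i, ∃ k, (x i - x i ^ 2) ^ k = 0 := fun i => h i (x i)
    choose k hk using hk
    refine ⟨Finset.univ.sup k, ?_⟩
    funext i
    have hle : k i ≤ Finset.univ.sup k := Finset.le_sup (Finset.mem_univ i)
    have : (x i - x i ^ 2) ^ Finset.univ.sup k = 0 := by
      rw [← Nat.add_sub_cancel' hle, pow_add, hk i, zero_mul]
    simpa using this
end

section
/- If R is a GSNC ring and e is a nonzero idempotent of R, then the corner ring eRe is GSNC. -/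
theorem corner_gsnc {R : Type*} [Ring R] (h : IsGSNC R) (e : R)
    (he : IsIdempotentElem e) (he0 : e ≠ 0) :
    ∀ a : R, e * a * e = a →
      (¬ ∃ b : R, e * b * e = b ∧ a * b = e ∧ b * a = e) →
        IsNilpotent (a - a ^ 2) := by
  intro a hea hnu
  have hee : e * e = e := he
  have hae : a * e = a := by
    nth_rewrite 1 [← hea]
    rw [mul_assoc, hee, hea]
  have hea' : e * a = a := by
    nth_rewrite 1 [← hea]
    rw [← mul_assoc, ← mul_assoc, hee, hea]
  set u := a + (1 - e) with hu
  have hnu' : ¬ IsUnit u := by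
    intro ⟨v, hv⟩
    apply hnu
    have h1 : u * v.inv = 1 := by rw [← hv]; exact v.val_inv
    have h2 : v.inv * u = 1 := by rw [← hv]; exact v.inv_val
    have hue : e * u = a := by
      rw [hu, mul_add, mul_sub, mul_one, hee, hea']; abel
    have heu : u * e = a := by
      rw [hu, add_mul, sub_mul, one_mul, hee, hae]; abel
    refine ⟨e * v.inv * e, by rw [mul_assoc, mul_assoc, hee, ← mul_assoc, ← mul_assoc, hee], ?_, ?_⟩
    · calc a * (e * v.inv * e) = e * u * v.inv * e := by
            rw [← mul_assoc, ← mul_assoc, hae, ← hue]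
        _ = e := by rw [mul_assoc e u, h1, mul_one, hee]
    · calc (e * v.inv * e) * a = e * v.inv * (u * e) := by
            rw [mul_assoc (e * v.inv) e a, hea', ← heu]
        _ = e := by rw [← mul_assoc, mul_assoc e v.inv u, h2, mul_one, hee]
  have ha1 : a * (1 - e) = 0 := by rw [mul_sub, mul_one, hae, sub_self]
  have h1a : (1 - e) * a = 0 := by rw [sub_mul, one_mul, hea', sub_self]
  have h11 : (1 - e) * (1 - e) = 1 - e := by
    rw [mul_sub, mul_one, sub_mul, one_mul, hee]; abel
  have hu2 : u ^ 2 = a ^ 2 + (1 - e) := by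
    rw [hu, sq, add_mul, mul_add, mul_add, ha1, h1a, h11, ← sq]; abel
  have key : u - u ^ 2 = a - a ^ 2 := by rw [hu, hu2]; abel
  have := h u hnu'
  rwa [key] at this
end

section
/- Every GSNC ring is directly finite: if ab = 1 then ba = 1. -/
theorem gsnc_directlyFinite {R : Type*} [Ring R] (h : IsGSNC R)
    {a b : R} (hab : a * b = 1) : b * a = 1 := by
  by_cases hb : IsUnit b
  · refine hb.mul_right_cancel ?_
    rw [one_mul, mul_assoc, hab, mul_one]
  · exfalso
    obtain ⟨n, hn⟩ := h b hb
    have hpow : ∀ m : ℕ, a ^ m * b ^ m = 1 := by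
      intro m
      induction m with
      | zero => simp
      | succ k ih =>
        rw [pow_succ, pow_succ']
        calc a ^ k * a * (b * b ^ k) = a ^ k * (a * b) * b ^ k := by noncomm_ring
        _ = 1 := by rw [hab, mul_one, ih]
    have hcomm : Commute b (1 - b) := (Commute.one_right b).sub_right (Commute.refl b)
    have heq : b - b ^ 2 = b * (1 - b) := by noncomm_ring
    rw [heq, hcomm.mul_pow] at hn
    have h1b : (1 - b) ^ n = 0 := by
      have := congrArg (a ^ n * ·) hn
      simpa [← mul_assoc, hpow n] using this
    exact hb (by simpa using (IsNilpotent.isUnit_one_sub ⟨n, h1b⟩))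
end
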